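/- Let ν be a σ-finite measure on a measurable space Y and μ a σ-finite measure on a measurable space X. Let p : Y → ℝ be nonnegative measurable with ∫ p dν = 1, and let px, qx : Y × X → ℝ be nonnegative measurable with ∫ px(y,·) dμ = 1 and ∫ qx(y,·) dμ = 1 for every y; let P_y and Q_y denote the probability measures on X with densities px(y,·) and qx(y,·) with respect to μ. Assume the functions (y,x) ↦ p(y)·px(y,x)·log(px(y,x)/(px(y,x)+qx(y,x))) and (y,x) ↦ p(y)·qx(y,x)·log(qx(y,x)/(px(y,x)+qx(y,x))) are (ν⊗μ)-integrable (convention 0·log(0/0) = 0). Then the supremum, over measurable D : Y × X → (0,1) for which the integrands below are integrable, of ∫∫ p(y)·px(y,x)·log D(y,x) d(ν⊗μ) + ∫∫ p(y)·qx(y,x)·log(1 − D(y,x)) d(ν⊗μ) equals −2·log 2 + 2·∫ p(y)·JSD(P_y, Q_y) dν(y). -/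

import Mathlib

open MeasureTheory ENNReal

/-- Kullback–Leibler divergence `KL(P ‖ M) = ∫ log (dP/dM) dP`. -/
noncomputable def klDiv {Ω : Type*} [MeasurableSpace Ω] (P M : Measure Ω) : ℝ :=
  ∫ ω, Real.log ((P.rnDeriv M ω).toReal) ∂P

/-- Jensen–Shannon divergence
`JSD(P, Q) = (1/2) KL(P ‖ M) + (1/2) KL(Q ‖ M)` with `M = (1/2) • (P + Q)`. -/
noncomputable def jsd {Ω : Type*} [MeasurableSpace Ω] (P Q : Measure Ω) : ℝ :=
  (1 / 2) * klDiv P ((1 / 2 : ℝ≥0∞) • (P + Q)) +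
  (1 / 2) * klDiv Q ((1 / 2 : ℝ≥0∞) • (P + Q))

/-!
Pointwise, `t ↦ a log t + b log (1 - t)` is maximised on `(0, 1)` at `t = a / (a + b)`, so
integrating bounds every discriminator's value by `∫ a log (a / (a + b)) + ∫ b log (b / (a + b))`
with `a = p px`, `b = p qx`; the discriminators `(a + ε) / (a + b + 2ε)` attain this in the limit
`ε → 0⁺` by dominated convergence (dominating function `a + b`). On the other side, the mixture
`M_y = (P_y + Q_y) / 2` has density `(px + qx) / 2`, so
`KL(P_y ‖ M_y) = log 2 + ∫ px log (px / (px + qx))`, and Fubini turns the `p`-average of these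
fibrewise identities into the same integrals. Integrability is automatic throughout, since
`|a log (a / (a + b))| ≤ b`.
-/

open Filter Topology

section Pointwise

variable {a b s t w ε : ℝ}

lemma mul_log_le_mul_log_div_add (ha : 0 ≤ a) (hs : 0 < s) (ht : 0 < t) :
    a * Real.log t ≤ a * Real.log (a / s) + (t * s - a) := by
  rcases ha.eq_or_lt with rfl | ha
  · simpa using (mul_pos ht hs).le
  have key := Real.log_le_sub_one_of_pos (x := t * s / a) (by positivity)
  rw [Real.log_div (by positivity) ha.ne', Real.log_mul ht.ne' hs.ne'] at key
  rw [Real.log_div ha.ne' hs.ne']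
  have : a * (t * s / a - 1) = t * s - a := by field_simp
  nlinarith [mul_le_mul_of_nonneg_left key ha.le]

lemma mul_log_add_mul_log_one_sub_le (ha : 0 ≤ a) (hb : 0 ≤ b) (ht₀ : 0 < t) (ht₁ : t < 1) :
    a * Real.log t + b * Real.log (1 - t) ≤
      a * Real.log (a / (a + b)) + b * Real.log (b / (a + b)) := by
  rcases (add_nonneg ha hb).eq_or_lt with hab | hab
  · obtain ⟨rfl, rfl⟩ : a = 0 ∧ b = 0 := ⟨by linarith, by linarith⟩
    simp
  have ha' := mul_log_le_mul_log_div_add ha hab ht₀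
  have hb' := mul_log_le_mul_log_div_add hb hab (sub_pos.2 ht₁)
  linarith

lemma abs_mul_log_div_add_le (ha : 0 ≤ a) (hb : 0 ≤ b) : |a * Real.log (a / (a + b))| ≤ b := by
  rcases ha.eq_or_lt with rfl | ha
  · simpa using hb
  have hx : 0 < a / (a + b) := by positivity
  have hlog : Real.log (a / (a + b)) ≤ 0 :=
    Real.log_nonpos hx.le (div_le_one_of_le₀ (by linarith) (by positivity))
  have key := Real.one_sub_inv_le_log_of_pos hx
  rw [inv_div] at key
  have : a * (1 - (a + b) / a) = -b := by field_simp; ring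
  rw [abs_of_nonpos (mul_nonpos_of_nonneg_of_nonpos ha.le hlog)]
  nlinarith [mul_le_mul_of_nonneg_left key ha.le]

lemma abs_mul_log_add_div_add_add_le (ha : 0 ≤ a) (hb : 0 ≤ b) (hε : 0 < ε) :
    |a * Real.log ((a + ε) / (a + b + 2 * ε))| ≤ a + b := by
  have hx : 0 < (a + ε) / (a + b + 2 * ε) := by positivity
  have hlog : Real.log ((a + ε) / (a + b + 2 * ε)) ≤ 0 :=
    Real.log_nonpos hx.le (div_le_one_of_le₀ (by linarith) (by positivity))
  have key := Real.one_sub_inv_le_log_of_pos hx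
  rw [inv_div] at key
  have : a * (1 - (a + b + 2 * ε) / (a + ε)) ≥ -(a + b) := by
    rw [ge_iff_le, ← sub_nonneg]
    field_simp
    nlinarith [mul_nonneg ha hb, mul_nonneg hb hε.le]
  rw [abs_of_nonpos (mul_nonpos_of_nonneg_of_nonpos ha hlog)]
  nlinarith [mul_le_mul_of_nonneg_left key ha]

lemma tendsto_mul_log_add_div_add_add (ha : 0 ≤ a) (hb : 0 ≤ b) :
    Tendsto (fun ε => a * Real.log ((a + ε) / (a + b + 2 * ε))) (𝓝 0)
      (𝓝 (a * Real.log (a / (a + b)))) := by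
  rcases ha.eq_or_lt with rfl | ha
  · simp
  have hcont : ContinuousAt (fun ε => a * Real.log ((a + ε) / (a + b + 2 * ε))) 0 := by
    fun_prop (disch := simp; positivity)
  simpa using hcont.tendsto

lemma mul_log_div_half_add (ha : 0 ≤ a) (hb : 0 ≤ b) :
    a * Real.log (a / ((a + b) / 2)) = a * Real.log 2 + a * Real.log (a / (a + b)) := by
  rcases ha.eq_or_lt with rfl | ha
  · simp
  rw [div_div_eq_mul_div, mul_comm a 2, mul_div_assoc, Real.log_mul two_ne_zero (by positivity),
    mul_add]

lemma mul_log_mul_div_mul : w * a * Real.log (w * a / (w * b)) = w * a * Real.log (a / b) := by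
  rcases eq_or_ne w 0 with rfl | hw
  · simp
  · rw [mul_div_mul_left _ _ hw]

end Pointwise

section Discriminator

variable {Z : Type*} [MeasurableSpace Z] {m : Measure Z} {a b : Z → ℝ}

lemma integrable_mul_log_div_add (ham : Measurable a) (hbm : Measurable b) (ha : ∀ z, 0 ≤ a z)
    (hb : ∀ z, 0 ≤ b z) (hbi : Integrable b m) :
    Integrable (fun z => a z * Real.log (a z / (a z + b z))) m :=
  hbi.mono' (by fun_prop) (ae_of_all _ fun z => abs_mul_log_div_add_le (ha z) (hb z))

lemma integrable_mul_log_add_div_add_add (ham : Measurable a) (hbm : Measurable b)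
    (ha : ∀ z, 0 ≤ a z) (hb : ∀ z, 0 ≤ b z) (hai : Integrable a m) (hbi : Integrable b m)
    {ε : ℝ} (hε : 0 < ε) :
    Integrable (fun z => a z * Real.log ((a z + ε) / (a z + b z + 2 * ε))) m :=
  (hai.add hbi).mono' (by fun_prop)
    (ae_of_all _ fun z => abs_mul_log_add_div_add_add_le (ha z) (hb z) hε)

lemma tendsto_integral_mul_log_add_div_add_add (ham : Measurable a) (hbm : Measurable b)
    (ha : ∀ z, 0 ≤ a z) (hb : ∀ z, 0 ≤ b z) (hai : Integrable a m) (hbi : Integrable b m) :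
    Tendsto (fun ε => ∫ z, a z * Real.log ((a z + ε) / (a z + b z + 2 * ε)) ∂m) (𝓝[>] 0)
      (𝓝 (∫ z, a z * Real.log (a z / (a z + b z)) ∂m)) :=
  tendsto_integral_filter_of_dominated_convergence (fun z => a z + b z)
    (Eventually.of_forall fun _ => by fun_prop)
    (eventually_mem_nhdsWithin.mono fun _ hε =>
      ae_of_all _ fun z => abs_mul_log_add_div_add_add_le (ha z) (hb z) hε)
    (hai.add hbi)
    (ae_of_all _ fun z => (tendsto_mul_log_add_div_add_add (ha z) (hb z)).mono_left
      nhdsWithin_le_nhds)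

theorem isLUB_integral_mul_log_add_integral_mul_log_one_sub (ham : Measurable a)
    (hbm : Measurable b) (ha : ∀ z, 0 ≤ a z) (hb : ∀ z, 0 ≤ b z) (hai : Integrable a m)
    (hbi : Integrable b m) :
    IsLUB
      {r : ℝ | ∃ D : Z → ℝ, Measurable D ∧ (∀ z, 0 < D z ∧ D z < 1) ∧
        Integrable (fun z => a z * Real.log (D z)) m ∧
        Integrable (fun z => b z * Real.log (1 - D z)) m ∧
        r = ∫ z, a z * Real.log (D z) ∂m + ∫ z, b z * Real.log (1 - D z) ∂m}
      (∫ z, a z * Real.log (a z / (a z + b z)) ∂m +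
        ∫ z, b z * Real.log (b z / (a z + b z)) ∂m) := by
  have hA := integrable_mul_log_div_add ham hbm ha hb hbi
  have hB : Integrable (fun z => b z * Real.log (b z / (a z + b z))) m := by
    simpa only [add_comm] using integrable_mul_log_div_add hbm ham hb ha hai
  constructor
  · rintro _ ⟨D, -, hD, hDa, hDb, rfl⟩
    rw [← integral_add hDa hDb, ← integral_add hA hB]
    exact integral_mono (hDa.add hDb) (hA.add hB) fun z =>
      mul_log_add_mul_log_one_sub_le (ha z) (hb z) (hD z).1 (hD z).2
  · intro c hc
    -- The optimal discriminator `a / (a + b)` may touch `0` and `1`; approach it from inside.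
    have hlim := (tendsto_integral_mul_log_add_div_add_add ham hbm ha hb hai hbi).add
      (tendsto_integral_mul_log_add_div_add_add hbm ham hb ha hbi hai)
    simp only [add_comm (b _) (a _)] at hlim
    refine le_of_tendsto hlim (eventually_mem_nhdsWithin.mono fun ε (hε : 0 < ε) => hc ?_)
    have h1D : ∀ z, 1 - (a z + ε) / (a z + b z + 2 * ε) = (b z + ε) / (a z + b z + 2 * ε) :=
      fun z => by
        have := ha z; have := hb z
        rw [one_sub_div (by positivity)]
        ring_nf
    refine ⟨fun z => (a z + ε) / (a z + b z + 2 * ε), by fun_prop, fun z => ⟨?_, ?_⟩,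
      integrable_mul_log_add_div_add_add ham hbm ha hb hai hbi hε, ?_, ?_⟩
    · have := ha z; have := hb z; positivity
    · have := ha z; have := hb z
      rw [div_lt_one (by positivity)]; linarith
    · simp only [h1D]
      simpa only [add_comm (b _) (a _)] using
        integrable_mul_log_add_div_add_add hbm ham hb ha hbi hai hε
    · simp only [h1D]

end Discriminator

section KullbackLeibler

variable {X : Type*} [MeasurableSpace X] {μ : Measure X} {a b c : X → ℝ}

lemma klDiv_withDensity_ofReal [SigmaFinite μ] (ham : Measurable a) (hcm : Measurable c)
    (ha : ∀ x, 0 ≤ a x) (hc : ∀ x, 0 ≤ c x) (hac : ∀ x, c x = 0 → a x = 0) :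
    klDiv (μ.withDensity fun x => ENNReal.ofReal (a x))
        (μ.withDensity fun x => ENNReal.ofReal (c x)) = ∫ x, a x * Real.log (a x / c x) ∂μ := by
  set M := μ.withDensity fun x => ENNReal.ofReal (c x)
  have hP : μ.withDensity (fun x => ENNReal.ofReal (a x))
      = M.withDensity fun x => ENNReal.ofReal (a x / c x) := by
    rw [← withDensity_mul _ (by fun_prop) (by fun_prop)]
    congr 1 with x
    rw [Pi.mul_apply, ← ENNReal.ofReal_mul (hc x)]
    rcases eq_or_ne (c x) 0 with h | h
    · simp [h, hac x h]
    · rw [mul_div_cancel₀ _ h]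
  have hrn : (μ.withDensity fun x => ENNReal.ofReal (a x)).rnDeriv M
      =ᵐ[μ.withDensity fun x => ENNReal.ofReal (a x)] fun x => ENNReal.ofReal (a x / c x) := by
    rw [hP]
    exact (withDensity_absolutelyContinuous _ _).ae_le
      (Measure.rnDeriv_withDensity M (by fun_prop))
  rw [klDiv, integral_congr_ae (hrn.mono fun x hx => by rw [hx]),
    integral_withDensity_eq_integral_toReal_smul (by fun_prop)
      (ae_of_all _ fun _ => ENNReal.ofReal_lt_top)]
  congr 1 with x
  rw [ENNReal.toReal_ofReal (ha x), ENNReal.toReal_ofReal (div_nonneg (ha x) (hc x)), smul_eq_mul]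

end KullbackLeibler

section JensenShannon

variable {X : Type*} [MeasurableSpace X] {μ : Measure X} {a b : X → ℝ}

lemma half_smul_withDensity_ofReal_add (ham : Measurable a) (ha : ∀ x, 0 ≤ a x)
    (hb : ∀ x, 0 ≤ b x) :
    (1 / 2 : ℝ≥0∞) • (μ.withDensity (fun x => ENNReal.ofReal (a x)) +
        μ.withDensity fun x => ENNReal.ofReal (b x))
      = μ.withDensity fun x => ENNReal.ofReal ((a x + b x) / 2) := by
  rw [← withDensity_add_left (by fun_prop), ← withDensity_smul' _ _ (by simp)]
  congr 1 with x
  simp only [Pi.smul_apply, Pi.add_apply, smul_eq_mul]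
  rw [← ENNReal.ofReal_add (ha x) (hb x), div_eq_inv_mul, ENNReal.ofReal_mul (by norm_num),
    one_div, ENNReal.ofReal_inv_of_pos two_pos, ENNReal.ofReal_ofNat]

lemma klDiv_withDensity_half_smul_add [SigmaFinite μ] (ham : Measurable a) (hbm : Measurable b)
    (ha : ∀ x, 0 ≤ a x) (hb : ∀ x, 0 ≤ b x) (ha₁ : ∫ x, a x ∂μ = 1) (hbi : Integrable b μ) :
    klDiv (μ.withDensity fun x => ENNReal.ofReal (a x))
        ((1 / 2 : ℝ≥0∞) • (μ.withDensity (fun x => ENNReal.ofReal (a x)) +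
          μ.withDensity fun x => ENNReal.ofReal (b x)))
      = Real.log 2 + ∫ x, a x * Real.log (a x / (a x + b x)) ∂μ := by
  rw [half_smul_withDensity_ofReal_add ham ha hb,
    klDiv_withDensity_ofReal ham (by fun_prop) ha (fun x => by linarith [ha x, hb x])
      (fun x hx => by linarith [ha x, hb x])]
  simp only [mul_log_div_half_add (ha _) (hb _)]
  rw [integral_add ((integrable_of_integral_eq_one ha₁).mul_const _)
      (integrable_mul_log_div_add ham hbm ha hb hbi), integral_mul_const, ha₁, one_mul]

lemma jsd_withDensity [SigmaFinite μ] (ham : Measurable a) (hbm : Measurable b)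
    (ha : ∀ x, 0 ≤ a x) (hb : ∀ x, 0 ≤ b x) (ha₁ : ∫ x, a x ∂μ = 1) (hb₁ : ∫ x, b x ∂μ = 1) :
    jsd (μ.withDensity fun x => ENNReal.ofReal (a x))
        (μ.withDensity fun x => ENNReal.ofReal (b x))
      = Real.log 2 + 1 / 2 * ∫ x, a x * Real.log (a x / (a x + b x)) ∂μ
          + 1 / 2 * ∫ x, b x * Real.log (b x / (a x + b x)) ∂μ := by
  have hQ := klDiv_withDensity_half_smul_add hbm ham hb ha hb₁ (integrable_of_integral_eq_one ha₁)
  rw [add_comm (μ.withDensity _)] at hQ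
  simp only [add_comm (b _) (a _)] at hQ
  rw [jsd, hQ,
    klDiv_withDensity_half_smul_add ham hbm ha hb ha₁ (integrable_of_integral_eq_one hb₁)]
  ring

end JensenShannon

section Conditional

variable {Y X : Type*} [MeasurableSpace Y] [MeasurableSpace X] {ν : Measure Y} {μ : Measure X}
  {p : Y → ℝ}

lemma integrable_mul_prod_of_integral_eq_one [SFinite μ] (hpm : Measurable p)
    (hpi : Integrable p ν) {a : Y × X → ℝ} (ham : Measurable a) (ha : ∀ z, 0 ≤ a z)
    (ha₁ : ∀ y, ∫ x, a (y, x) ∂μ = 1) :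
    Integrable (fun z => p z.1 * a z) (ν.prod μ) := by
  refine (integrable_prod_iff (by fun_prop)).2 ⟨ae_of_all _ fun y =>
    (integrable_of_integral_eq_one (ha₁ y)).const_mul (p y), ?_⟩
  have hfiber : ∀ y, ∫ x, ‖p y * a (y, x)‖ ∂μ = ‖p y‖ := fun y => by
    simp only [norm_mul, Real.norm_of_nonneg (ha _), integral_const_mul, ha₁, mul_one]
  simpa only [hfiber] using hpi.norm

lemma integrable_mul_mul_log_div_add [SFinite μ] (hpm : Measurable p) (hp : ∀ y, 0 ≤ p y)
    (hpi : Integrable p ν) {a b : Y × X → ℝ} (ham : Measurable a) (hbm : Measurable b)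
    (ha : ∀ z, 0 ≤ a z) (hb : ∀ z, 0 ≤ b z) (hb₁ : ∀ y, ∫ x, b (y, x) ∂μ = 1) :
    Integrable (fun z => p z.1 * a z * Real.log (a z / (a z + b z))) (ν.prod μ) := by
  have := integrable_mul_log_div_add (m := ν.prod μ) (a := fun z => p z.1 * a z)
    (b := fun z => p z.1 * b z) (by fun_prop) (by fun_prop)
    (fun z => mul_nonneg (hp _) (ha z)) (fun z => mul_nonneg (hp _) (hb z))
    (integrable_mul_prod_of_integral_eq_one hpm hpi hbm hb hb₁)
  simpa only [← mul_add, mul_log_mul_div_mul] using this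

lemma integral_mul_jsd_withDensity [SFinite ν] [SigmaFinite μ] (hpm : Measurable p)
    (hp : ∀ y, 0 ≤ p y) (hp₁ : ∫ y, p y ∂ν = 1) {px qx : Y × X → ℝ} (hpxm : Measurable px)
    (hqxm : Measurable qx) (hpx : ∀ z, 0 ≤ px z) (hqx : ∀ z, 0 ≤ qx z)
    (hpx₁ : ∀ y, ∫ x, px (y, x) ∂μ = 1) (hqx₁ : ∀ y, ∫ x, qx (y, x) ∂μ = 1) :
    ∫ y, p y * jsd (μ.withDensity fun x => ENNReal.ofReal (px (y, x)))
        (μ.withDensity fun x => ENNReal.ofReal (qx (y, x))) ∂ν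
      = Real.log 2 + 1 / 2 * ∫ z, p z.1 * px z * Real.log (px z / (px z + qx z)) ∂(ν.prod μ)
          + 1 / 2 * ∫ z, p z.1 * qx z * Real.log (qx z / (px z + qx z)) ∂(ν.prod μ) := by
  have hpi := integrable_of_integral_eq_one hp₁
  have hF := integrable_mul_mul_log_div_add hpm hp hpi hpxm hqxm hpx hqx hqx₁
  have hG :
      Integrable (fun z => p z.1 * qx z * Real.log (qx z / (px z + qx z))) (ν.prod μ) := by
    simpa only [add_comm (qx _)] using
      integrable_mul_mul_log_div_add hpm hp hpi hqxm hpxm hqx hpx hpx₁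
  calc _ = ∫ y, (p y * Real.log 2
          + 1 / 2 * ∫ x, p y * px (y, x) * Real.log (px (y, x) / (px (y, x) + qx (y, x))) ∂μ
          + 1 / 2 * ∫ x, p y * qx (y, x) * Real.log (qx (y, x) / (px (y, x) + qx (y, x))) ∂μ)
          ∂ν := by
        congr 1 with y
        rw [jsd_withDensity (by fun_prop) (by fun_prop) (fun x => hpx _) (fun x => hqx _) (hpx₁ y)
          (hqx₁ y)]
        simp only [mul_assoc, integral_const_mul]
        ring
    _ = _ := by
      have hF' : Integrable (fun y => 1 / 2 *
          ∫ x, p y * px (y, x) * Real.log (px (y, x) / (px (y, x) + qx (y, x))) ∂μ) ν :=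
        hF.integral_prod_left.const_mul _
      have hG' : Integrable (fun y => 1 / 2 *
          ∫ x, p y * qx (y, x) * Real.log (qx (y, x) / (px (y, x) + qx (y, x))) ∂μ) ν :=
        hG.integral_prod_left.const_mul _
      have hpF : Integrable (fun y => p y * Real.log 2 + 1 / 2 *
          ∫ x, p y * px (y, x) * Real.log (px (y, x) / (px (y, x) + qx (y, x))) ∂μ) ν :=
        (hpi.mul_const _).add hF'
      rw [integral_add hpF hG', integral_add (hpi.mul_const _) hF',
        integral_mul_const, hp₁, one_mul, integral_const_mul, integral_const_mul,
        integral_prod _ hF, integral_prod _ hG]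

end Conditional

theorem conditional_gan_sup_value_eq_expected_jsd_general
    {Y X : Type*} [MeasurableSpace Y] [MeasurableSpace X]
    (ν : Measure Y) [SigmaFinite ν] (μ : Measure X) [SigmaFinite μ]
    (p : Y → ℝ) (hpm : Measurable p) (hp0 : ∀ y, 0 ≤ p y) (hp1 : ∫ y, p y ∂ν = 1)
    (px qx : Y × X → ℝ) (hpxm : Measurable px) (hqxm : Measurable qx)
    (hpx0 : ∀ z, 0 ≤ px z) (hqx0 : ∀ z, 0 ≤ qx z)
    (hpx1 : ∀ y, ∫ x, px (y, x) ∂μ = 1) (hqx1 : ∀ y, ∫ x, qx (y, x) ∂μ = 1) :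
    IsLUB
      {r : ℝ | ∃ D : Y × X → ℝ, Measurable D ∧ (∀ z, 0 < D z ∧ D z < 1) ∧
        Integrable (fun z => p z.1 * px z * Real.log (D z)) (ν.prod μ) ∧
        Integrable (fun z => p z.1 * qx z * Real.log (1 - D z)) (ν.prod μ) ∧
        r = ∫ z, p z.1 * px z * Real.log (D z) ∂(ν.prod μ) +
            ∫ z, p z.1 * qx z * Real.log (1 - D z) ∂(ν.prod μ)}
      (-2 * Real.log 2 +
        2 * ∫ y, p y * jsd (μ.withDensity fun x => ENNReal.ofReal (px (y, x)))
                           (μ.withDensity fun x => ENNReal.ofReal (qx (y, x))) ∂ν) := by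
  have hpi := integrable_of_integral_eq_one hp1
  have hlub := isLUB_integral_mul_log_add_integral_mul_log_one_sub (m := ν.prod μ)
    (a := fun z => p z.1 * px z) (b := fun z => p z.1 * qx z) (by fun_prop) (by fun_prop)
    (fun z => mul_nonneg (hp0 _) (hpx0 z)) (fun z => mul_nonneg (hp0 _) (hqx0 z))
    (integrable_mul_prod_of_integral_eq_one hpm hpi hpxm hpx0 hpx1)
    (integrable_mul_prod_of_integral_eq_one hpm hpi hqxm hqx0 hqx1)
  simp only [← mul_add, mul_log_mul_div_mul] at hlub
  rw [integral_mul_jsd_withDensity hpm hp0 hp1 hpxm hqxm hpx0 hqx0 hpx1 hqx1]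
  convert hlub using 1
  ring

theorem conditional_gan_sup_value_eq_expected_jsd
    {Y X : Type*} [MeasurableSpace Y] [MeasurableSpace X]
    (ν : Measure Y) [SigmaFinite ν] (μ : Measure X) [SigmaFinite μ]
    (p : Y → ℝ) (hpm : Measurable p) (hp0 : ∀ y, 0 ≤ p y) (hp1 : ∫ y, p y ∂ν = 1)
    (px qx : Y × X → ℝ) (hpxm : Measurable px) (hqxm : Measurable qx)
    (hpx0 : ∀ z, 0 ≤ px z) (hqx0 : ∀ z, 0 ≤ qx z)
    (hpx1 : ∀ y, ∫ x, px (y, x) ∂μ = 1) (hqx1 : ∀ y, ∫ x, qx (y, x) ∂μ = 1)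
    (h3 : Integrable
      (fun z => p z.1 * px z * Real.log (px z / (px z + qx z))) (ν.prod μ))
    (h4 : Integrable
      (fun z => p z.1 * qx z * Real.log (qx z / (px z + qx z))) (ν.prod μ)) :
    IsLUB
      {r : ℝ | ∃ D : Y × X → ℝ, Measurable D ∧ (∀ z, 0 < D z ∧ D z < 1) ∧
        Integrable (fun z => p z.1 * px z * Real.log (D z)) (ν.prod μ) ∧
        Integrable (fun z => p z.1 * qx z * Real.log (1 - D z)) (ν.prod μ) ∧
        r = ∫ z, p z.1 * px z * Real.log (D z) ∂(ν.prod μ) +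
            ∫ z, p z.1 * qx z * Real.log (1 - D z) ∂(ν.prod μ)}
      (-2 * Real.log 2 +
        2 * ∫ y, p y * jsd (μ.withDensity fun x => ENNReal.ofReal (px (y, x)))
                           (μ.withDensity fun x => ENNReal.ofReal (qx (y, x))) ∂ν) :=
  conditional_gan_sup_value_eq_expected_jsd_general ν μ p hpm hp0 hp1 px qx hpxm hqxm hpx0 hqx0 hpx1
    hqx1
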